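/- Let θ₁*,…,θ_n* ∈ ℝ^m, let θ* = (1/n)∑_i θ_i*, and H ≥ 0. Define Ψ = (√H / n²)·∑_{j=1}^n ∑_{k=1}^n ‖θ_j* − θ_k*‖₁. Suppose for each i there is a function J_i : ℝ^m → ℝ that is H-smooth with J_i(θ_i*) = 0 and ∇J_i(θ_i*) = 0. Then (1/n)·∑_i J_i(θ*) ≤ n³·Ψ². -/

import Mathlib

/-!
At its own optimum θᵢ the loss Jᵢ has value and gradient zero, so the mean value inequality with
the H-Lipschitz gradient gives Jᵢ(θ*) ≤ H‖θ* - θᵢ‖². The distance from θᵢ to the average θ* is at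
most the average of the distances ‖θⱼ - θᵢ‖, each bounded by its ℓ¹ norm, so ‖θ* - θᵢ‖ ≤ S / n for
the total pairwise ℓ¹ distance S. Averaging gives H S² / n², which is below n³Ψ² = H S² / n.
-/

open Finset

theorem EuclideanSpace.norm_le_sum_norm {ι 𝕜 : Type*} [Fintype ι] [RCLike 𝕜]
    (x : EuclideanSpace 𝕜 ι) : ‖x‖ ≤ ∑ i, ‖x i‖ := by
  conv_lhs => rw [← (EuclideanSpace.basisFun ι 𝕜).sum_repr x]
  refine (norm_sum_le _ _).trans_eq ?_
  simp [norm_smul]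

theorem norm_average_sub_le {ι E : Type*} [Fintype ι] [SeminormedAddCommGroup E] [NormedSpace ℝ E]
    (v : ι → E) (i : ι) :
    ‖(Fintype.card ι : ℝ)⁻¹ • ∑ j, v j - v i‖ ≤ (Fintype.card ι : ℝ)⁻¹ * ∑ j, ‖v j - v i‖ := by
  have hcard : (Fintype.card ι : ℝ) ≠ 0 := Nat.cast_ne_zero.mpr (Fintype.card_pos_iff.mpr ⟨i⟩).ne'
  have hvi : v i = (Fintype.card ι : ℝ)⁻¹ • ∑ _j : ι, v i := by
    rw [sum_const, card_univ, ← Nat.cast_smul_eq_nsmul ℝ, smul_smul, inv_mul_cancel₀ hcard,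
      one_smul]
  rw [hvi, ← smul_sub, ← sum_sub_distrib, norm_smul, Real.norm_of_nonneg (by positivity), ← hvi]
  exact mul_le_mul_of_nonneg_left (norm_sum_le _ _) (by positivity)

theorem abs_sub_le_mul_norm_sq_of_norm_gradient_le {E : Type*} [NormedAddCommGroup E]
    [InnerProductSpace ℝ E] [CompleteSpace E] {f : E → ℝ} {H : ℝ} (hH : 0 ≤ H)
    (hf : Differentiable ℝ f) {x : E} (hgrad : ∀ z, ‖gradient f z‖ ≤ H * ‖z - x‖) (y : E) :
    |f y - f x| ≤ H * ‖y - x‖ ^ 2 := by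
  have hfderiv : ∀ z ∈ Metric.closedBall x ‖y - x‖, ‖fderiv ℝ f z‖ ≤ H * ‖y - x‖ := fun z hz ↦ by
    rw [← (InnerProductSpace.toDual ℝ E).symm.norm_map]
    exact (hgrad z).trans (mul_le_mul_of_nonneg_left (mem_closedBall_iff_norm.mp hz) hH)
  have := (convex_closedBall x ‖y - x‖).norm_image_sub_le_of_norm_fderiv_le
    (fun z _ ↦ hf z) hfderiv (Metric.mem_closedBall_self (norm_nonneg _))
    (mem_closedBall_iff_norm.mpr le_rfl)
  rw [← Real.norm_eq_abs]
  linarith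

theorem stmt_10_general (m n : ℕ) (H : ℝ) (hH : 0 ≤ H)
    (J : Fin n → EuclideanSpace ℝ (Fin m) → ℝ)
    (hdiff : ∀ i, Differentiable ℝ (J i))
    (hlip : ∀ i x y, ‖gradient (J i) x - gradient (J i) y‖ ≤ H * ‖x - y‖)
    (θ : Fin n → EuclideanSpace ℝ (Fin m))
    (hval : ∀ i, J i (θ i) = 0) (hgrad : ∀ i, gradient (J i) (θ i) = 0)
    (θstar : EuclideanSpace ℝ (Fin m)) (hstar : θstar = (n : ℝ)⁻¹ • ∑ i, θ i)
    (Ψ : ℝ)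
    (hΨ : Ψ = (Real.sqrt H / (n : ℝ) ^ 2) * ∑ j, ∑ k, ∑ i, |θ j i - θ k i|) :
    (n : ℝ)⁻¹ * ∑ i, J i θstar ≤ (n : ℝ) ^ 3 * Ψ ^ 2 := by
  rcases n.eq_zero_or_pos with rfl | hn
  · simp
  set S := ∑ j, ∑ k, ∑ i, |θ j i - θ k i|
  have hdist : ∀ i, ‖θstar - θ i‖ ≤ S / n := fun i ↦ calc
    ‖θstar - θ i‖ ≤ (n : ℝ)⁻¹ * ∑ j, ‖θ j - θ i‖ := by
      simpa [hstar] using norm_average_sub_le θ i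
    _ ≤ (n : ℝ)⁻¹ * ∑ j, ∑ c, |θ j c - θ i c| := by
      gcongr with j
      simpa using EuclideanSpace.norm_le_sum_norm (θ j - θ i)
    _ ≤ S / n := by
      rw [inv_mul_eq_div]
      gcongr
      exact sum_le_sum fun j _ ↦ single_le_sum (f := fun k ↦ ∑ c, |θ j c - θ k c|)
        (fun k _ ↦ sum_nonneg fun _ _ ↦ abs_nonneg _) (mem_univ i)
  have hJ : ∀ i, J i θstar ≤ H * (S / n) ^ 2 := fun i ↦ by
    have hgrad_le : ∀ z, ‖gradient (J i) z‖ ≤ H * ‖z - θ i‖ := fun z ↦ by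
      simpa [hgrad i] using hlip i z (θ i)
    calc J i θstar ≤ |J i θstar - J i (θ i)| := by rw [hval i, sub_zero]; exact le_abs_self _
      _ ≤ H * ‖θstar - θ i‖ ^ 2 :=
        abs_sub_le_mul_norm_sq_of_norm_gradient_le hH (hdiff i) hgrad_le θstar
      _ ≤ H * (S / n) ^ 2 := by gcongr; exact hdist i
  have hn1 : (1 : ℝ) ≤ n := by exact_mod_cast hn
  calc (n : ℝ)⁻¹ * ∑ i, J i θstar ≤ (n : ℝ)⁻¹ * ∑ _i : Fin n, H * (S / n) ^ 2 := by
        gcongr with i; exact hJ i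
    _ = H * S ^ 2 / n ^ 2 := by
      rw [sum_const, card_univ, Fintype.card_fin, nsmul_eq_mul]; field_simp
    _ ≤ H * S ^ 2 / n := by gcongr; nlinarith
    _ = (n : ℝ) ^ 3 * Ψ ^ 2 := by rw [hΨ, mul_pow, div_pow, Real.sq_sqrt hH]; field_simp

theorem stmt_10 (m n : ℕ) (hn : 0 < n) (H : ℝ) (hH : 0 ≤ H)
    (J : Fin n → EuclideanSpace ℝ (Fin m) → ℝ)
    (hdiff : ∀ i, Differentiable ℝ (J i))
    (hlip : ∀ i x y, ‖gradient (J i) x - gradient (J i) y‖ ≤ H * ‖x - y‖)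
    (θ : Fin n → EuclideanSpace ℝ (Fin m))
    (hval : ∀ i, J i (θ i) = 0) (hgrad : ∀ i, gradient (J i) (θ i) = 0)
    (θstar : EuclideanSpace ℝ (Fin m)) (hstar : θstar = (n : ℝ)⁻¹ • ∑ i, θ i)
    (Ψ : ℝ)
    (hΨ : Ψ = (Real.sqrt H / (n : ℝ) ^ 2) * ∑ j, ∑ k, ∑ i, |θ j i - θ k i|) :
    (n : ℝ)⁻¹ * ∑ i, J i θstar ≤ (n : ℝ) ^ 3 * Ψ ^ 2 :=
  stmt_10_general m n H hH J hdiff hlip θ hval hgrad θstar hstar Ψ hΨ
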